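/- arXiv:0911.4896 — 2 statements merged into one kernel-verified Lean document; each statement's English description precedes it below -/
import Mathlib

section
/- Fix ν ∈ ℕ and let h = (h_0, …, h_ν) be i.i.d. standard complex Gaussian random variables. For a block length L ≥ ν+1 define λ_k = Σ_{i=0}^{ν} h_i exp(−2π√−1 · i(k−1)/L), k = 1, …, L. Then for every rate R > 0 the zero-forcing SC-FDE outage probability P_out(s) = P[ Σ_{k=1}^{L} 1/(s·|λ_k|²) > L/(2^R − 1) ] satisfies lim_{s→∞} log P_out(s)/log s = −1; in particular the diversity order of ZF SC-FDE equals 1 regardless of the channel memory length ν, the block length L, and the rate R. (Paper's Theorem 3 for the outage probability.) -/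
open MeasureTheory ProbabilityTheory Filter

/-- The law of a standard complex Gaussian random variable: real and imaginary
parts are independent real Gaussians with mean `0` and variance `1/2`. -/
noncomputable def stdComplexGaussian : Measure ℂ :=
  ((gaussianReal 0 (1/2)).prod (gaussianReal 0 (1/2))).map
    (fun p : ℝ × ℝ => (p.1 : ℂ) + (p.2 : ℂ) * Complex.I)

/-- The `L`-point DFT values of the (zero-padded) channel taps `h = (h_0, …, h_ν)`:
`λ_k = ∑_{i=0}^{ν} h_i exp(-2π√-1 · i k / L)` (with `k = 0, …, L-1`
corresponding to the paper's `k - 1`). -/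
noncomputable def dftVal (ν L : ℕ) (h : Fin (ν + 1) → ℂ) (k : Fin L) : ℂ :=
  ∑ i : Fin (ν + 1),
    h i * Complex.exp (-(2 * (Real.pi : ℂ) * Complex.I) * (i.val : ℂ) * (k.val : ℂ) / (L : ℂ))

open Real Topology
open scoped ENNReal NNReal

/-!
Each `λ_k` is `h_0` plus a function of the remaining taps, and the standard complex Gaussian
density `π⁻¹ exp (-‖z‖²)` is at most `π⁻¹`, so `P(|λ_k| ≤ r) ≤ r²`; conditioning on the remaining
taps lying in the unit disc, it is also at least a constant times `r²` when `r ≤ 1`.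
With `c = 2^R - 1`, the outage event contains `{|λ_k|² ≤ c/(2Ls)}` for any single `k` and is
contained in the union over `k` of `{|λ_k|² ≤ c/s}`, so `P_out(s)` lies between two constant
multiples of `1/s`.
-/

lemma tendsto_log_div_log_of_le_of_le {f : ℝ → ℝ} {a b d : ℝ} (ha : 0 < a) (hb : 0 < b)
    (hf : ∀ᶠ s in atTop, a * s ^ (-d) ≤ f s ∧ f s ≤ b * s ^ (-d)) :
    Tendsto (fun s => log (f s) / log s) atTop (𝓝 (-d)) := by
  have hlim (c : ℝ) : Tendsto (fun s => log c / log s - d) atTop (𝓝 (-d)) := by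
    simpa using (tendsto_const_nhds.div_atTop tendsto_log_atTop).sub_const d
  have hbound {c s : ℝ} (hc : 0 < c) (hs : 1 < s) :
      log c / log s - d = log (c * s ^ (-d)) / log s := by
    have : log s ≠ 0 := (log_pos hs).ne'
    rw [log_mul hc.ne' (rpow_pos_of_pos (by linarith) _).ne', log_rpow (by linarith)]
    field_simp
    ring
  refine tendsto_of_tendsto_of_tendsto_of_le_of_le' (hlim a) (hlim b) ?_ ?_ <;>
    filter_upwards [hf, eventually_gt_atTop 1] with s ⟨hlo, hhi⟩ hs
  · rw [hbound ha hs]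
    exact div_le_div_of_nonneg_right (log_le_log (by positivity) hlo) (log_pos hs).le
  · rw [hbound hb hs]
    exact div_le_div_of_nonneg_right
      (log_le_log ((by positivity : 0 < a * s ^ (-d)).trans_le hlo) hhi) (log_pos hs).le

lemma gaussianPDF_zero_half (x : ℝ) :
    gaussianPDF 0 (1/2) x = ENNReal.ofReal ((√π)⁻¹ * exp (-x ^ 2)) := by
  have hvar : 2 * π * ((1 / 2 : ℝ≥0) : ℝ) = π := by push_cast; ring
  rw [gaussianPDF, gaussianPDFReal, hvar]
  congr 3
  push_cast
  ring

lemma stdComplexGaussian_eq_withDensity :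
    stdComplexGaussian =
      volume.withDensity fun z : ℂ => ENNReal.ofReal (π⁻¹ * exp (-‖z‖ ^ 2)) := by
  have hv : (1 / 2 : ℝ≥0) ≠ 0 := by norm_num
  have he : (fun p : ℝ × ℝ => (p.1 : ℂ) + (p.2 : ℂ) * Complex.I) =
      Complex.measurableEquivRealProd.symm := by
    funext p
    rw [Complex.measurableEquivRealProd_symm_apply, Complex.mk_eq_add_mul_I]
  have hmeas : Measurable fun z : ℂ => ENNReal.ofReal (π⁻¹ * exp (-‖z‖ ^ 2)) := by fun_prop
  ext S hS
  have hS' := hS.preimage Complex.measurableEquivRealProd.symm.measurable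
  rw [stdComplexGaussian, he, gaussianReal_of_var_ne_zero _ hv,
    prod_withDensity (measurable_gaussianPDF _ _) (measurable_gaussianPDF _ _),
    ← Measure.volume_eq_prod, Measure.map_apply Complex.measurableEquivRealProd.symm.measurable hS,
    withDensity_apply _ hS', withDensity_apply _ hS,
    ← (Complex.volume_preserving_equiv_real_prod.symm _).map_eq,
    setLIntegral_map hS hmeas Complex.measurableEquivRealProd.symm.measurable]
  refine setLIntegral_congr_fun hS' fun p _ => ?_
  rw [gaussianPDF_zero_half, gaussianPDF_zero_half, ← ENNReal.ofReal_mul (by positivity),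
    Complex.measurableEquivRealProd_symm_apply, Complex.sq_norm, Complex.normSq_mk,
    mul_mul_mul_comm, ← mul_inv, ← sq, sq_sqrt pi_pos.le, ← exp_add]
  ring_nf

instance : IsProbabilityMeasure stdComplexGaussian :=
  Measure.isProbabilityMeasure_map (by fun_prop)

lemma setLIntegral_closedBall_inv_pi_mul (c : ℂ) {r M : ℝ} (hr : 0 ≤ r) (hM : 0 ≤ M) :
    ∫⁻ _ in Metric.closedBall c r, ENNReal.ofReal (π⁻¹ * M) = ENNReal.ofReal (M * r ^ 2) := by
  rw [setLIntegral_const, Complex.volume_closedBall, ← ENNReal.ofReal_pow hr,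
    ← ENNReal.ofReal_coe_nnreal, NNReal.coe_real_pi, ← ENNReal.ofReal_mul (by positivity),
    ← ENNReal.ofReal_mul (by positivity)]
  congr 1
  field_simp

lemma stdComplexGaussian_closedBall_le (c : ℂ) {r : ℝ} (hr : 0 ≤ r) :
    stdComplexGaussian (Metric.closedBall c r) ≤ ENNReal.ofReal (r ^ 2) := by
  rw [stdComplexGaussian_eq_withDensity, withDensity_apply _ measurableSet_closedBall,
    ← one_mul (r ^ 2), ← setLIntegral_closedBall_inv_pi_mul c hr zero_le_one]
  refine setLIntegral_mono measurable_const fun z _ => ENNReal.ofReal_le_ofReal ?_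
  gcongr
  exact exp_le_one_iff.2 (by nlinarith [sq_nonneg ‖z‖])

lemma le_stdComplexGaussian_closedBall (c : ℂ) {r : ℝ} (hr : 0 ≤ r) :
    ENNReal.ofReal (exp (-(‖c‖ + r) ^ 2) * r ^ 2) ≤
      stdComplexGaussian (Metric.closedBall c r) := by
  rw [stdComplexGaussian_eq_withDensity, withDensity_apply _ measurableSet_closedBall,
    ← setLIntegral_closedBall_inv_pi_mul c hr (exp_pos _).le]
  refine setLIntegral_mono (by fun_prop) fun z hz => ENNReal.ofReal_le_ofReal ?_
  have hz : ‖z‖ ≤ ‖c‖ + r := by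
    have := norm_le_norm_add_norm_sub' z c
    rw [← dist_eq_norm] at this
    linarith [Metric.mem_closedBall.1 hz]
  gcongr

lemma MeasureTheory.Measure.pi_fin_succ_apply_eq_lintegral {α : Type*} [MeasurableSpace α]
    (μ : Measure α) [SigmaFinite μ] {n : ℕ} {E : Set (Fin (n + 1) → α)} (hE : MeasurableSet E) :
    Measure.pi (fun _ => μ) E =
      ∫⁻ t, μ {x | Fin.cons x t ∈ E} ∂Measure.pi (fun _ : Fin n => μ) := by
  have hmp := (measurePreserving_piFinSuccAbove (fun _ : Fin (n + 1) => μ) 0).symm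
  rw [← hmp.measure_preimage hE.nullMeasurableSet,
    Measure.prod_apply_symm (hE.preimage (MeasurableEquiv.measurable _))]
  simp [MeasurableEquiv.piFinSuccAbove_symm_apply, Fin.insertNthEquiv, Fin.insertNth_zero',
    Set.preimage]

noncomputable abbrev channelLaw (n : ℕ) : Measure (Fin n → ℂ) :=
  Measure.pi fun _ => stdComplexGaussian

section DFT

variable {ν L : ℕ}

lemma measurable_dftVal (k : Fin L) : Measurable fun h => dftVal ν L h k := by
  unfold dftVal
  fun_prop

lemma dftVal_cons (x : ℂ) (t : Fin ν → ℂ) (k : Fin L) :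
    dftVal ν L (Fin.cons x t) k = x + dftVal ν L (Fin.cons 0 t) k := by
  simp [dftVal, Fin.sum_univ_succ]

lemma norm_dftVal_le (h : Fin (ν + 1) → ℂ) (k : Fin L) : ‖dftVal ν L h k‖ ≤ ∑ i, ‖h i‖ := by
  refine (norm_sum_le _ _).trans (Finset.sum_le_sum fun i _ => ?_)
  have hre : (-(2 * (π : ℂ) * Complex.I) * (i.val : ℂ) * (k.val : ℂ) / (L : ℂ)).re = 0 := by
    simp [Complex.div_re]
  rw [norm_mul, Complex.norm_exp, hre, exp_zero, mul_one]

lemma channelLaw_norm_dftVal_le_eq (k : Fin L) (r : ℝ) :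
    channelLaw (ν + 1) {h | ‖dftVal ν L h k‖ ≤ r} =
      ∫⁻ t, stdComplexGaussian (Metric.closedBall (-dftVal ν L (Fin.cons 0 t) k) r)
        ∂channelLaw ν := by
  rw [Measure.pi_fin_succ_apply_eq_lintegral _
    (measurableSet_le (measurable_dftVal k).norm measurable_const)]
  congr! with t
  ext x
  rw [Metric.mem_closedBall, dist_eq_norm, sub_neg_eq_add, ← dftVal_cons]
  rfl

lemma channelLaw_norm_dftVal_le_le (k : Fin L) {r : ℝ} (hr : 0 ≤ r) :
    channelLaw (ν + 1) {h | ‖dftVal ν L h k‖ ≤ r} ≤ ENNReal.ofReal (r ^ 2) := by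
  rw [channelLaw_norm_dftVal_le_eq]
  calc _ ≤ ∫⁻ _, ENNReal.ofReal (r ^ 2) ∂channelLaw ν :=
        lintegral_mono fun _ => stdComplexGaussian_closedBall_le _ hr
    _ = ENNReal.ofReal (r ^ 2) := by simp

lemma le_channelLaw_norm_dftVal_le (k : Fin L) {r : ℝ} (hr₀ : 0 ≤ r) (hr₁ : r ≤ 1) :
    ENNReal.ofReal (exp (-(ν + 1) ^ 2 - ν) * r ^ 2) ≤
      channelLaw (ν + 1) {h | ‖dftVal ν L h k‖ ≤ r} := by
  set A : Set (Fin ν → ℂ) := Set.univ.pi fun _ => Metric.closedBall 0 1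
  have hA : ENNReal.ofReal (exp (-ν)) ≤ channelLaw ν A := by
    have hball := le_stdComplexGaussian_closedBall (0 : ℂ) zero_le_one
    rw [norm_zero, zero_add, one_pow, mul_one] at hball
    rw [Measure.pi_pi, Finset.prod_const, Finset.card_univ, Fintype.card_fin,
      ← mul_neg_one, exp_nat_mul, ENNReal.ofReal_pow (exp_pos _).le]
    gcongr
  have hslice (t) (ht : t ∈ A) : ENNReal.ofReal (exp (-(ν + 1) ^ 2) * r ^ 2) ≤
      stdComplexGaussian (Metric.closedBall (-dftVal ν L (Fin.cons 0 t) k) r) := by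
    have hcentre : ‖-dftVal ν L (Fin.cons 0 t) k‖ ≤ ν := by
      rw [norm_neg]
      refine (norm_dftVal_le _ k).trans ?_
      simpa [Fin.sum_univ_succ] using Finset.sum_le_card_nsmul Finset.univ (fun j => ‖t j‖) 1
        fun j _ => by simpa using ht j (Set.mem_univ j)
    refine le_trans (ENNReal.ofReal_le_ofReal ?_) (le_stdComplexGaussian_closedBall _ hr₀)
    gcongr
  rw [channelLaw_norm_dftVal_le_eq]
  calc ENNReal.ofReal (exp (-(ν + 1) ^ 2 - ν) * r ^ 2)
      = ENNReal.ofReal (exp (-(ν + 1) ^ 2) * r ^ 2) * ENNReal.ofReal (exp (-ν)) := by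
        rw [← ENNReal.ofReal_mul (by positivity), sub_eq_add_neg, exp_add]
        ring_nf
    _ ≤ ENNReal.ofReal (exp (-(ν + 1) ^ 2) * r ^ 2) * channelLaw ν A := by gcongr
    _ = ∫⁻ _ in A, ENNReal.ofReal (exp (-(ν + 1) ^ 2) * r ^ 2) ∂channelLaw ν :=
        (setLIntegral_const _ _).symm
    _ ≤ _ := setLIntegral_mono' (MeasurableSet.univ_pi fun _ => measurableSet_closedBall) hslice
    _ ≤ _ := setLIntegral_le_lintegral _ _

end DFT

def zfOutage (ν L : ℕ) (s c : ℝ) : Set (Fin (ν + 1) → ℂ) :=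
  {h | ¬ ((∀ k : Fin L, dftVal ν L h k ≠ 0) ∧
    ∑ k : Fin L, 1 / (s * ‖dftVal ν L h k‖ ^ 2) ≤ (L : ℝ) / c)}

section Outage

variable {ν L : ℕ} {s c r : ℝ}

lemma zfOutage_subset_iUnion (hs : 0 < s) (hc : 0 < c) (hr₀ : 0 ≤ r) (hr : c ≤ s * r ^ 2) :
    zfOutage ν L s c ⊆ ⋃ k, {h | ‖dftVal ν L h k‖ ≤ r} := by
  intro h hout
  by_contra hmem
  simp only [Set.mem_iUnion, Set.mem_ofPred_eq, not_exists, not_le] at hmem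
  refine hout ⟨fun k => norm_pos_iff.1 (hr₀.trans_lt (hmem k)), ?_⟩
  calc ∑ k, 1 / (s * ‖dftVal ν L h k‖ ^ 2) ≤ ∑ _k : Fin L, 1 / c :=
        Finset.sum_le_sum fun k _ => one_div_le_one_div_of_le hc <|
          hr.trans (by gcongr; exact (hmem k).le)
    _ = L / c := by simp [div_eq_mul_inv]

lemma setOf_norm_dftVal_le_subset_zfOutage (hs : 0 < s) (hc : 0 < c) (k : Fin L)
    (hr : L * (s * r ^ 2) < c) :
    {h | ‖dftVal ν L h k‖ ≤ r} ⊆ zfOutage ν L s c := by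
  rintro h hle ⟨hne, hsum⟩
  have hpos : 0 < s * ‖dftVal ν L h k‖ ^ 2 := by have := hne k; positivity
  have hterm : (L : ℝ) / c < 1 / (s * ‖dftVal ν L h k‖ ^ 2) := by
    rw [div_lt_div_iff₀ hc hpos, one_mul]
    refine lt_of_le_of_lt ?_ hr
    gcongr
    exact hle
  have hsingle := Finset.single_le_sum (f := fun j => 1 / (s * ‖dftVal ν L h j‖ ^ 2))
    (fun j _ => one_div_nonneg.2 (by positivity)) (Finset.mem_univ k)
  exact (hterm.trans_le hsingle).not_ge hsum

lemma channelLaw_zfOutage_le (hs : 0 < s) (hc : 0 < c) :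
    channelLaw (ν + 1) (zfOutage ν L s c) ≤ ENNReal.ofReal (L * c / s) := by
  have hr : √(c / s) ^ 2 = c / s := sq_sqrt (by positivity)
  calc channelLaw (ν + 1) (zfOutage ν L s c)
      ≤ channelLaw (ν + 1) (⋃ k, {h | ‖dftVal ν L h k‖ ≤ √(c / s)}) :=
        measure_mono <| zfOutage_subset_iUnion hs hc (sqrt_nonneg _) <| by
          rw [hr, mul_div_cancel₀ _ hs.ne']
    _ ≤ ∑ k, channelLaw (ν + 1) {h | ‖dftVal ν L h k‖ ≤ √(c / s)} :=
        measure_iUnion_fintype_le _ _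
    _ ≤ ∑ _k : Fin L, ENNReal.ofReal (√(c / s) ^ 2) :=
        Finset.sum_le_sum fun k _ => channelLaw_norm_dftVal_le_le k (sqrt_nonneg _)
    _ = ENNReal.ofReal (L * c / s) := by
        rw [hr, Finset.sum_const, Finset.card_univ, Fintype.card_fin, nsmul_eq_mul,
          ← ENNReal.ofReal_natCast, ← ENNReal.ofReal_mul (Nat.cast_nonneg _), mul_div_assoc]

lemma le_channelLaw_zfOutage (hL : 0 < L) (hc : 0 < c) (hs : c / (2 * L) ≤ s) :
    ENNReal.ofReal (exp (-(ν + 1) ^ 2 - ν) * (c / (2 * L)) / s) ≤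
      channelLaw (ν + 1) (zfOutage ν L s c) := by
  have hL' : (0 : ℝ) < L := Nat.cast_pos.2 hL
  have hs₀ : 0 < s := (by positivity : 0 < c / (2 * L)).trans_le hs
  have hr : √(c / (2 * L) / s) ^ 2 = c / (2 * L) / s := sq_sqrt (by positivity)
  have hr₁ : √(c / (2 * L) / s) ≤ 1 := sqrt_le_one.2 ((div_le_one hs₀).2 hs)
  calc ENNReal.ofReal (exp (-(ν + 1) ^ 2 - ν) * (c / (2 * L)) / s)
      = ENNReal.ofReal (exp (-(ν + 1) ^ 2 - ν) * √(c / (2 * L) / s) ^ 2) := by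
        rw [hr, mul_div_assoc]
    _ ≤ channelLaw (ν + 1) {h | ‖dftVal ν L h ⟨0, hL⟩‖ ≤ √(c / (2 * L) / s)} :=
        le_channelLaw_norm_dftVal_le _ (sqrt_nonneg _) hr₁
    _ ≤ channelLaw (ν + 1) (zfOutage ν L s c) :=
        measure_mono <| setOf_norm_dftVal_le_subset_zfOutage hs₀ hc _ <| by
          rw [hr]
          field_simp
          linarith

end Outage

/-- Paper's Theorem 3 (outage part): for zero-forcing SC-FDE, the outage
probability `P[∑_{k=1}^{L} 1/(s|λ_k|²) > L/(2^R - 1)]` has exponential order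
`-1` in `s`, for every memory length `ν`, block length `L ≥ ν + 1` and rate
`R > 0`; i.e. the ZF diversity order is always `1`.  (On the null event where
some `λ_k = 0`, the summand is read as `+∞`, i.e. the outage event is the
complement of `{all λ_k ≠ 0 and ∑ 1/(s|λ_k|²) ≤ L/(2^R - 1)}`.) -/
theorem theorem3_zf_diversity_one (ν L : ℕ) (hL : ν + 1 ≤ L) (R : ℝ) (hR : 0 < R) :
    Tendsto (fun s : ℝ =>
      Real.log ((Measure.pi (fun _ : Fin (ν + 1) => stdComplexGaussian)
          {h : Fin (ν + 1) → ℂ |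
            ¬ ((∀ k : Fin L, dftVal ν L h k ≠ 0) ∧
              ∑ k : Fin L, 1 / (s * ‖dftVal ν L h k‖ ^ 2) ≤
                (L : ℝ) / ((2 : ℝ) ^ R - 1))}).toReal)
        / Real.log s)
      atTop (nhds (-1)) := by
  set c := (2 : ℝ) ^ R - 1
  have hc : 0 < c := sub_pos.2 (one_lt_rpow one_lt_two hR)
  have hL₀ : 0 < L := (Nat.succ_pos ν).trans_le hL
  refine tendsto_log_div_log_of_le_of_le (d := 1) (a := exp (-(ν + 1) ^ 2 - ν) * (c / (2 * L)))
    (b := L * c) (by positivity) (by positivity) ?_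
  filter_upwards [eventually_ge_atTop (c / (2 * L)), eventually_gt_atTop 0] with s hs hs₀
  rw [rpow_neg_one, ← div_eq_mul_inv, ← div_eq_mul_inv]
  exact ⟨(ENNReal.ofReal_le_iff_le_toReal (measure_ne_top _ _)).1
      (le_channelLaw_zfOutage hL₀ hc hs),
    ENNReal.toReal_le_of_le_ofReal (by positivity) (channelLaw_zfOutage_le hs₀ hc)⟩
end

section
/- Let L ≥ 1, v : ZMod L → ℂ, let H = Matrix.circulant v, and let λ_k = Σ_{m ∈ ZMod L} v(m) · exp(−2π√−1 · (k.val · m.val)/L) for k ∈ ZMod L be its DFT values. Then for every real s > 0 the matrix A = Hᴴ * H + s⁻¹ • (1 : Matrix (ZMod L) (ZMod L) ℂ) is invertible, and its inverse has trace trace(A⁻¹) = Σ_{k ∈ ZMod L} 1/(|λ_k|² + s⁻¹). Consequently the per-symbol MMSE error variance (1/L)·trace(A⁻¹) equals (1/L) Σ_k 1/(|λ_k|² + s⁻¹). (The trace computation underlying the MMSE decision-point SINR, equation (10) of the paper.) -/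
open Matrix

/-!
The DFT matrix `F = (e^{2πi jk/L})_{j,k}` diagonalises every circulant matrix:
`circulant w * F = F * diag (𝓕 w)`. Since `(circulant v)ᴴ` is again circulant, with DFT the complex
conjugate of `𝓕 v`, the matrix `A = Hᴴ H + s⁻¹ I` satisfies `A F = F diag (|𝓕 v k|² + s⁻¹)`.
The diagonal entries are positive and `F` is invertible (`Fᴴ F = L I`), so `A` is invertible
and, trace being a similarity invariant, `trace A⁻¹ = ∑ₖ (|𝓕 v k|² + s⁻¹)⁻¹`.
-/

namespace Matrix

variable {n K : Type*} [Fintype n] [DecidableEq n] [Field K]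

theorem isUnit_and_trace_inv_of_mul_eq_mul_diagonal {A P : Matrix n n K} {d : n → K}
    (hP : IsUnit P) (hd : ∀ i, d i ≠ 0) (h : A * P = P * diagonal d) :
    IsUnit A ∧ trace A⁻¹ = ∑ i, (d i)⁻¹ := by
  have hPinv : P * P⁻¹ = 1 := mul_nonsing_inv P ((isUnit_iff_isUnit_det P).mp hP)
  have hdd : diagonal d * diagonal (fun i => (d i)⁻¹) = 1 := by
    rw [diagonal_mul_diagonal, ← diagonal_one]
    exact congrArg diagonal (funext fun i => mul_inv_cancel₀ (hd i))
  have hAB : A * (P * diagonal (fun i => (d i)⁻¹) * P⁻¹) = 1 := by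
    rw [← mul_assoc, ← mul_assoc, h, mul_assoc P, hdd, mul_one, hPinv]
  refine ⟨(isUnit_iff_isUnit_det A).mpr (isUnit_det_of_right_inverse hAB), ?_⟩
  rw [inv_eq_right_inv hAB, trace_conj hP, trace_diagonal]

end Matrix

namespace ZMod

variable {N : ℕ} [NeZero N]

theorem star_stdAddChar (a : ZMod N) : star (stdAddChar a : ℂ) = stdAddChar (-a) := by
  rw [AddChar.map_neg_eq_conj, Complex.star_def]

variable (N) in
noncomputable def dftMatrix : Matrix (ZMod N) (ZMod N) ℂ := of fun j k => stdAddChar (j * k)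

theorem dftMatrix_conjTranspose_mul_self : (dftMatrix N)ᴴ * dftMatrix N = (N : ℂ) • 1 := by
  ext i k
  have hchar (j : ZMod N) :
      star (stdAddChar (j * i) : ℂ) * stdAddChar (j * k) = stdAddChar (j * (k - i)) := by
    rw [star_stdAddChar, ← AddChar.map_add_eq_mul]
    ring_nf
  simp only [mul_apply, conjTranspose_apply, dftMatrix, of_apply, hchar,
    AddChar.sum_mulShift _ (isPrimitive_stdAddChar N), sub_eq_zero, Matrix.smul_apply, one_apply]
  obtain rfl | hik := eq_or_ne i k
  · simp
  · simp [hik, hik.symm]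

theorem isUnit_dftMatrix : IsUnit (dftMatrix N) := by
  have h : ((N : ℂ)⁻¹ • (dftMatrix N)ᴴ) * dftMatrix N = 1 := by
    rw [smul_mul, dftMatrix_conjTranspose_mul_self, smul_smul, inv_mul_cancel₀ (NeZero.ne _),
      one_smul]
  exact (isUnit_iff_isUnit_det _).mpr (isUnit_det_of_left_inverse h)

theorem circulant_mul_dftMatrix (w : ZMod N → ℂ) :
    circulant w * dftMatrix N = dftMatrix N * diagonal (𝓕 w) := by
  ext i k
  rw [mul_apply, mul_diagonal]
  simp only [circulant_apply, dftMatrix, of_apply, dft_apply, smul_eq_mul, Finset.mul_sum]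
  refine Fintype.sum_equiv (Equiv.subLeft i) _ _ fun m => ?_
  have hchar : (stdAddChar (m * k) : ℂ) = stdAddChar (-((i - m) * k)) * stdAddChar (i * k) := by
    rw [← AddChar.map_add_eq_mul]
    ring_nf
  rw [Equiv.subLeft_apply, hchar]
  ring

theorem dft_star_comp_neg (w : ZMod N → ℂ) : 𝓕 (star fun i => w (-i)) = star (𝓕 w) := by
  ext k
  simp only [dft_apply, Pi.star_apply, star_sum, smul_eq_mul, star_mul', star_stdAddChar]
  refine Fintype.sum_equiv (Equiv.neg (ZMod N)) _ _ fun m => ?_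
  simp [mul_comm]

theorem conjTranspose_circulant_mul_self_add_smul_one_mul_dftMatrix (w : ZMod N → ℂ) (c : ℝ) :
    ((circulant w)ᴴ * circulant w + c • (1 : Matrix (ZMod N) (ZMod N) ℂ)) * dftMatrix N =
      dftMatrix N * diagonal (fun k => ((‖𝓕 w k‖ ^ 2 + c : ℝ) : ℂ)) := by
  have hc : c • (1 : Matrix (ZMod N) (ZMod N) ℂ) = diagonal fun _ => (c : ℂ) := by
    rw [← Complex.coe_smul, smul_one_eq_diagonal]
  rw [add_mul, mul_assoc, circulant_mul_dftMatrix, ← mul_assoc, conjTranspose_circulant,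
    circulant_mul_dftMatrix, dft_star_comp_neg, mul_assoc, diagonal_mul_diagonal,
    ((Commute.one_left _).smul_left c).eq, ← mul_add, hc, diagonal_add]
  congr 2 with k
  rw [Pi.star_apply, Complex.star_def, Complex.conj_mul']
  push_cast
  rfl

theorem dft_apply_eq_sum_exp (w : ZMod N → ℂ) (k : ZMod N) :
    𝓕 w k = ∑ m : ZMod N, w m *
      Complex.exp (-(2 * (Real.pi : ℂ) * Complex.I) * ((k.val : ℂ) * (m.val : ℂ)) / (N : ℂ)) := by
  refine Finset.sum_congr rfl fun m _ => ?_
  have hcast : -(m * k) = ((-(k.val * m.val : ℤ) : ℤ) : ZMod N) := by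
    push_cast
    rw [natCast_zmod_val, natCast_zmod_val]
    ring
  rw [smul_eq_mul, mul_comm, hcast, stdAddChar_coe]
  push_cast
  ring_nf

end ZMod

/-- Equation (10) of the paper: for a circulant channel matrix `H` with DFT
values `λ_k`, and any SNR `s > 0`, the matrix `A = Hᴴ H + s⁻¹ I` is invertible
and `trace A⁻¹ = ∑_k 1/(|λ_k|² + s⁻¹)`; hence the per-symbol MMSE error
variance `(1/L) trace A⁻¹` equals `(1/L) ∑_k 1/(|λ_k|² + s⁻¹)`. -/
theorem mmse_trace_inverse (L : ℕ) [NeZero L] (v : ZMod L → ℂ) (s : ℝ) (hs : 0 < s) :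
    IsUnit ((Matrix.circulant v)ᴴ * Matrix.circulant v +
        s⁻¹ • (1 : Matrix (ZMod L) (ZMod L) ℂ)) ∧
      Matrix.trace (((Matrix.circulant v)ᴴ * Matrix.circulant v +
          s⁻¹ • (1 : Matrix (ZMod L) (ZMod L) ℂ))⁻¹)
        = ∑ k : ZMod L,
            ((1 / (‖∑ m : ZMod L, v m *
              Complex.exp (-(2 * (Real.pi : ℂ) * Complex.I) *
                ((k.val : ℂ) * (m.val : ℂ)) / (L : ℂ))‖ ^ 2 + s⁻¹) : ℝ) : ℂ) := by
  have hpos (k : ZMod L) : ((‖ZMod.dft v k‖ ^ 2 + s⁻¹ : ℝ) : ℂ) ≠ 0 :=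
    Complex.ofReal_ne_zero.mpr (by positivity)
  obtain ⟨hunit, htrace⟩ := isUnit_and_trace_inv_of_mul_eq_mul_diagonal ZMod.isUnit_dftMatrix hpos
    (ZMod.conjTranspose_circulant_mul_self_add_smul_one_mul_dftMatrix v s⁻¹)
  refine ⟨hunit, htrace.trans (Finset.sum_congr rfl fun k _ => ?_)⟩
  rw [← ZMod.dft_apply_eq_sum_exp, one_div, Complex.ofReal_inv]
end
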